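/- Let θ_s be defined by s! = √(2πs) sˢ e^{-s} e^{θ_s} (Stirling's formula with error term), so that the binomial probability B_n(m) = C(n,m) p^m q^{n-m} with q = 1 - p, m = np + x√(npq), satisfies √(npq) B_n(m) → (1/√(2π)) e^{-x²/2} as n → ∞ with x fixed in a bounded interval. -/

import Mathlib

open Filter Real Topology

/-!
By Stirling's formula `n! = s n * √(2n) * (n / e) ^ n` with `s n → √π`. Writing `l = n - m`,
`u = m / (n p)` and `v = l / (n q)`, this turns `√(npq) * C(n, m) * p ^ m * q ^ l` exactly into
`s n / (s m * s l) * (2 u v) ^ (-1/2) * exp (-(n p φ u + n q φ v))`, where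
`φ u = u log u - (u - 1)`. The normalisation of `m` forces `u, v → 1`, so the first two factors
tend to `1 / √π` and `1 / √2`, while `φ u = (u - 1) ^ 2 / 2 + O(|u - 1| ^ 3)` together with
`n p (u - 1) ^ 2 → x ^ 2 q` and `n q (v - 1) ^ 2 → x ^ 2 p` make the exponent tend to
`-x ^ 2 / 2`.
-/

theorem abs_mul_log_sub_sub_sq_le {u : ℝ} (hu : |u - 1| ≤ 1 / 2) :
    |u * log u - (u - 1) - (u - 1) ^ 2 / 2| ≤ 4 * |u - 1| ^ 3 := by
  obtain ⟨e, rfl⟩ : ∃ e, u = 1 + e := ⟨u - 1, by ring⟩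
  rw [add_sub_cancel_left] at hu ⊢
  have he : |-e| < 1 := by rw [abs_neg]; linarith
  have he3 : 0 ≤ |e| ^ 3 := by positivity
  have htaylor : |log (1 + e) - e + e ^ 2 / 2| ≤ 2 * |e| ^ 3 := by
    have key := abs_log_sub_add_sum_range_le he 2
    norm_num [Finset.sum_range_succ] at key
    calc _ = |-e + e ^ 2 / 2 + log (1 + e)| := by ring_nf
      _ ≤ |e| ^ 3 / (1 - |e|) := key
      _ ≤ 2 * |e| ^ 3 := by
        rw [div_le_iff₀ (by linarith)]
        nlinarith
  have hu_le : |1 + e| ≤ 3 / 2 := by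
    rw [abs_le] at hu ⊢; constructor <;> linarith
  calc |(1 + e) * log (1 + e) - e - e ^ 2 / 2|
      = |(1 + e) * (log (1 + e) - e + e ^ 2 / 2) - e ^ 3 / 2| := by ring_nf
    _ ≤ |1 + e| * |log (1 + e) - e + e ^ 2 / 2| + |e| ^ 3 / 2 := by
        refine (abs_sub _ _).trans_eq ?_
        rw [abs_mul, abs_div, abs_pow, abs_two]
    _ ≤ 3 / 2 * (2 * |e| ^ 3) + |e| ^ 3 / 2 := by gcongr
    _ ≤ 4 * |e| ^ 3 := by linarith

theorem tendsto_mul_log_div_sub_sub {k a : ℕ → ℝ} {c : ℝ} (ha : ∀ᶠ n in atTop, 0 < a n)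
    (hk : Tendsto (fun n ↦ k n / a n) atTop (𝓝 1))
    (hc : Tendsto (fun n ↦ (k n - a n) ^ 2 / a n) atTop (𝓝 c)) :
    Tendsto (fun n ↦ k n * log (k n / a n) - (k n - a n)) atTop (𝓝 (c / 2)) := by
  have hk0 : Tendsto (fun n ↦ |k n / a n - 1|) atTop (𝓝 0) := by
    simpa using (hk.sub_const 1).abs
  have hbound : ∀ᶠ n in atTop,
      ‖k n * log (k n / a n) - (k n - a n) - (k n - a n) ^ 2 / a n / 2‖ ≤
        4 * ((k n - a n) ^ 2 / a n) * |k n / a n - 1| := by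
    filter_upwards [ha, hk0.eventually (eventually_le_nhds (by norm_num : (0 : ℝ) < 1 / 2))]
      with n han hkn
    have hsub : k n / a n - 1 = (k n - a n) / a n := by field_simp
    calc _ = a n * |k n / a n * log (k n / a n) - (k n / a n - 1) - (k n / a n - 1) ^ 2 / 2| := by
          rw [Real.norm_eq_abs, ← abs_of_pos han, ← abs_mul, abs_of_pos han, hsub]
          congr 1; field_simp
      _ ≤ a n * (4 * |k n / a n - 1| ^ 3) := by gcongr; exact abs_mul_log_sub_sub_sq_le hkn
      _ = _ := by rw [pow_succ, sq_abs, hsub, div_pow]; field_simp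
  have hdiff := squeeze_zero_norm' hbound (by simpa using (hc.const_mul 4).mul hk0)
  simpa using hdiff.add (hc.div_const 2)

section NormalizedDeviation

variable {p q x : ℝ} {k : ℕ → ℝ}

theorem tendsto_div_mul_of_tendsto_sub_div_sqrt (hp : 0 < p) (hq : 0 < q)
    (hk : Tendsto (fun n : ℕ ↦ (k n - n * p) / √(n * p * q)) atTop (𝓝 x)) :
    Tendsto (fun n : ℕ ↦ k n / (n * p)) atTop (𝓝 1) := by
  have hscale : Tendsto (fun n : ℕ ↦ √(q / p / n)) atTop (𝓝 0) := by
    simpa using (tendsto_const_div_atTop_nhds_zero_nat (q / p)).sqrt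
  have hlim := (hk.mul hscale).const_add 1
  rw [mul_zero, add_zero] at hlim
  refine hlim.congr' ?_
  filter_upwards [eventually_ne_atTop 0] with n hn
  have hn : (0 : ℝ) < n := by positivity
  rw [sqrt_div' _ hn.le, sqrt_div hq.le, sqrt_mul (by positivity), sqrt_mul hn.le]
  field_simp
  rw [sq_sqrt hn.le, sq_sqrt hp.le]
  ring

theorem tendsto_mul_log_div_mul_sub_of_tendsto_sub_div_sqrt (hp : 0 < p) (hq : 0 < q)
    (hk : Tendsto (fun n : ℕ ↦ (k n - n * p) / √(n * p * q)) atTop (𝓝 x)) :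
    Tendsto (fun n : ℕ ↦ k n * log (k n / (n * p)) - (k n - n * p)) atTop
      (𝓝 (x ^ 2 * q / 2)) := by
  refine tendsto_mul_log_div_sub_sub ?_ (tendsto_div_mul_of_tendsto_sub_div_sqrt hp hq hk)
    (((hk.pow 2).mul_const q).congr' ?_)
  · filter_upwards [eventually_ne_atTop 0] with n hn
    positivity
  · filter_upwards [eventually_ne_atTop 0] with n hn
    have hn : (0 : ℝ) < n := by positivity
    rw [div_pow, sq_sqrt (by positivity)]
    field_simp

end NormalizedDeviation

theorem Stirling.factorial_eq_stirlingSeq_mul {n : ℕ} (hn : n ≠ 0) :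
    (n.factorial : ℝ) = Stirling.stirlingSeq n * (√(2 * n) * (n / exp 1) ^ n) := by
  rw [Stirling.stirlingSeq, div_mul_cancel₀]
  positivity

theorem Stirling.stirlingSeq_pos {n : ℕ} (hn : n ≠ 0) : 0 < Stirling.stirlingSeq n :=
  (sqrt_pos.2 pi_pos).trans_le (Stirling.sqrt_pi_le_stirlingSeq hn)

theorem cast_choose_mul_pow_mul_pow {k l n : ℕ} (hkl : k + l = n) (hk : k ≠ 0) (hl : l ≠ 0)
    (p q : ℝ) :
    (n.choose k : ℝ) * p ^ k * q ^ l =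
      Stirling.stirlingSeq n / (Stirling.stirlingSeq k * Stirling.stirlingSeq l) *
        √(n / (2 * k * l)) * (n * p / k) ^ k * (n * q / l) ^ l := by
  subst hkl
  have hsk := Stirling.stirlingSeq_pos hk
  have hsl := Stirling.stirlingSeq_pos hl
  rw [Nat.cast_choose ℝ (Nat.le_add_right k l), Nat.add_sub_cancel_left,
    Stirling.factorial_eq_stirlingSeq_mul (by omega), Stirling.factorial_eq_stirlingSeq_mul hk,
    Stirling.factorial_eq_stirlingSeq_mul hl]
  push_cast
  rw [sqrt_div' _ (by positivity), sqrt_mul (by positivity : (0 : ℝ) ≤ 2 * k) l]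
  simp only [sqrt_mul zero_le_two, div_pow, mul_pow, pow_add]
  field_simp

theorem div_pow_eq_exp_neg_mul_log {a : ℝ} {k : ℕ} (ha : 0 < a) (hk : k ≠ 0) :
    (a / k) ^ k = exp (-(k * log (k / a))) := by
  rw [← mul_neg, ← log_inv, inv_div, exp_nat_mul, exp_log (by positivity)]

theorem sqrt_mul_choose_mul_pow_mul_pow_eq {p q : ℝ} {k l n : ℕ} (hp : 0 < p) (hq : 0 < q)
    (hpq : p + q = 1) (hkl : k + l = n) (hk : k ≠ 0) (hl : l ≠ 0) :
    √(n * p * q) * (n.choose k : ℝ) * p ^ k * q ^ l =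
      Stirling.stirlingSeq n / (Stirling.stirlingSeq k * Stirling.stirlingSeq l) *
        √(1 / (2 * ((k : ℝ) / (n * p) * (l / (n * q))))) *
        exp (-(k * log (k / (n * p)) - (k - n * p) + (l * log (l / (n * q)) - (l - n * q)))) := by
  have hn : n ≠ 0 := by omega
  have hsqrt : √(n * p * q) * √(n / (2 * k * l)) =
      √(1 / (2 * ((k : ℝ) / (n * p) * (l / (n * q))))) := by
    rw [← sqrt_mul (by positivity)]
    congr 1
    field_simp
  have hexponent : -((k : ℝ) * log (k / (n * p)) + l * log (l / (n * q))) =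
      -(k * log (k / (n * p)) - (k - n * p) + (l * log (l / (n * q)) - (l - n * q))) := by
    linear_combination (n : ℝ) * hpq - (by exact_mod_cast hkl : (k : ℝ) + l = n)
  have hchoose := cast_choose_mul_pow_mul_pow hkl hk hl p q
  rw [div_pow_eq_exp_neg_mul_log (by positivity) hk,
    div_pow_eq_exp_neg_mul_log (by positivity) hl] at hchoose
  rw [← hsqrt, ← hexponent, neg_add, exp_add]
  linear_combination √(n * p * q) * hchoose

section Binomial

variable {p : ℝ} {k : ℕ → ℕ}

theorem tendsto_atTop_of_tendsto_div_mul (hp : 0 < p)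
    (hk : Tendsto (fun n : ℕ ↦ (k n : ℝ) / (n * p)) atTop (𝓝 1)) :
    Tendsto k atTop atTop := by
  rw [← tendsto_natCast_atTop_iff (R := ℝ)]
  refine ((tendsto_natCast_atTop_atTop.atTop_mul_const hp).atTop_mul_pos one_pos hk).congr' ?_
  filter_upwards [eventually_ne_atTop 0] with n hn
  field_simp

theorem eventually_lt_of_tendsto_div_mul (hp : 0 < p) (hp1 : p < 1)
    (hk : Tendsto (fun n : ℕ ↦ (k n : ℝ) / (n * p)) atTop (𝓝 1)) :
    ∀ᶠ n in atTop, k n < n := by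
  filter_upwards [hk.eventually (gt_mem_nhds ((one_lt_inv₀ hp).2 hp1)), eventually_ne_atTop 0]
    with n hkn hn
  rw [div_lt_iff₀ (by positivity), mul_comm (n : ℝ), inv_mul_cancel_left₀ hp.ne'] at hkn
  exact_mod_cast hkn

theorem tendsto_sqrt_mul_choose_mul_pow_mul_pow {q A B : ℝ} {l : ℕ → ℕ} (hp : 0 < p)
    (hq : 0 < q) (hpq : p + q = 1) (hkl : ∀ᶠ n in atTop, k n + l n = n)
    (hk : Tendsto (fun n : ℕ ↦ (k n : ℝ) / (n * p)) atTop (𝓝 1))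
    (hl : Tendsto (fun n : ℕ ↦ (l n : ℝ) / (n * q)) atTop (𝓝 1))
    (hA : Tendsto (fun n : ℕ ↦ k n * log (k n / (n * p)) - (k n - n * p)) atTop (𝓝 A))
    (hB : Tendsto (fun n : ℕ ↦ l n * log (l n / (n * q)) - (l n - n * q)) atTop (𝓝 B)) :
    Tendsto (fun n : ℕ ↦ √(n * p * q) * (n.choose (k n) : ℝ) * p ^ k n * q ^ l n) atTop
      (𝓝 (1 / √(2 * π) * exp (-(A + B)))) := by
  have hk_top := tendsto_atTop_of_tendsto_div_mul hp hk
  have hl_top := tendsto_atTop_of_tendsto_div_mul hq hl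
  have hs := Stirling.tendsto_stirlingSeq_sqrt_pi
  have hstirling := hs.div ((hs.comp hk_top).mul (hs.comp hl_top)) (by positivity)
  have hsqrt : Tendsto (fun n : ℕ ↦ √(1 / (2 * ((k n : ℝ) / (n * p) * (l n / (n * q))))))
      atTop (𝓝 √(1 / (2 * (1 * 1)))) :=
    (tendsto_const_nhds.div ((hk.mul hl).const_mul 2) (by norm_num)).sqrt
  have hlim := (hstirling.mul hsqrt).mul (hA.add hB).neg.rexp
  have hconst : √π / (√π * √π) * √(1 / (2 * (1 * 1))) = 1 / √(2 * π) := by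
    rw [sqrt_mul zero_le_two, one_div, sqrt_inv]
    field_simp
  rw [hconst] at hlim
  refine hlim.congr' ?_
  filter_upwards [hkl, hk_top.eventually_ne_atTop 0, hl_top.eventually_ne_atTop 0]
    with n hkln hk0 hl0
  exact (sqrt_mul_choose_mul_pow_mul_pow_eq hp hq hpq hkln hk0 hl0).symm

end Binomial

theorem de_moivre_laplace_local_general (p : ℝ) (hp : 0 < p) (hp1 : p < 1)
    (q : ℝ) (hq : q = 1 - p) (m : ℕ → ℕ) (x : ℝ)
    (hx : Tendsto (fun n : ℕ => ((m n : ℝ) - n * p) / Real.sqrt (n * p * q))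
      atTop (nhds x)) :
    Tendsto (fun n : ℕ =>
        Real.sqrt (n * p * q) * (n.choose (m n) : ℝ) * p ^ (m n) * q ^ (n - m n))
      atTop (nhds ((1 / Real.sqrt (2 * π)) * Real.exp (-x ^ 2 / 2))) := by
  have hq0 : 0 < q := by linarith
  have hm_div := tendsto_div_mul_of_tendsto_sub_div_sqrt hp hq0 hx
  have hm_le : ∀ᶠ n in atTop, m n ≤ n :=
    (eventually_lt_of_tendsto_div_mul hp hp1 hm_div).mono fun n hn ↦ hn.le
  have hx' : Tendsto (fun n : ℕ ↦ (((n - m n : ℕ) : ℝ) - n * q) / √(n * q * p)) atTop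
      (𝓝 (-x)) := by
    refine hx.neg.congr' ?_
    filter_upwards [hm_le] with n hn
    rw [Nat.cast_sub hn, mul_right_comm _ q p, hq]
    ring
  convert tendsto_sqrt_mul_choose_mul_pow_mul_pow hp hq0 (by linarith)
    (hm_le.mono fun n hn ↦ Nat.add_sub_cancel' hn) hm_div
    (tendsto_div_mul_of_tendsto_sub_div_sqrt hq0 hp hx')
    (tendsto_mul_log_div_mul_sub_of_tendsto_sub_div_sqrt hp hq0 hx)
    (tendsto_mul_log_div_mul_sub_of_tendsto_sub_div_sqrt hq0 hp hx') using 4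
  rw [hq]
  ring

/-- Local central limit theorem (de Moivre–Laplace): if `0 < p < 1`, `q = 1 - p`, and
`m n` is an integer sequence with `m n ≤ n` such that `(m n - n p)/√(n p q) → x`, then
`√(n p q) · C(n, m n) p^{m n} q^{n - m n} → e^{-x²/2}/√(2π)`. -/
theorem de_moivre_laplace_local (p : ℝ) (hp : 0 < p) (hp1 : p < 1)
    (q : ℝ) (hq : q = 1 - p) (m : ℕ → ℕ) (hm : ∀ n, m n ≤ n) (x : ℝ)
    (hx : Tendsto (fun n : ℕ => ((m n : ℝ) - n * p) / Real.sqrt (n * p * q))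
      atTop (nhds x)) :
    Tendsto (fun n : ℕ =>
        Real.sqrt (n * p * q) * (n.choose (m n) : ℝ) * p ^ (m n) * q ^ (n - m n))
      atTop (nhds ((1 / Real.sqrt (2 * π)) * Real.exp (-x ^ 2 / 2))) :=
  de_moivre_laplace_local_general p hp hp1 q hq m x hx
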